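/- arXiv:1212.2594 — 2 statements merged into one kernel-verified Lean document; each statement's English description precedes it below -/
import Mathlib

section
/- For every matrix F ∈ ℝ^{3×3}, the Frobenius norm of √(FᵀF) − I is at most the distance of F to SO(3), i.e. |√(FᵀF) − Id| ≤ dist(F, SO(3)). -/
open scoped BigOperators Matrix

noncomputable section

abbrev M3 := Matrix (Fin 3) (Fin 3) ℝ

section

open scoped ComplexOrder

/-- The positive semidefinite square root of a positive semidefinite matrix
(Mathlib's former `Matrix.PosSemidef.sqrt`, removed since; restored with its old definition). -/
def Matrix.PosSemidef.sqrt {n 𝕜 : Type*} [Fintype n] [DecidableEq n] [RCLike 𝕜]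
    {A : Matrix n n 𝕜} (hA : A.PosSemidef) : Matrix n n 𝕜 :=
  hA.1.eigenvectorUnitary.1 * Matrix.diagonal ((↑) ∘ (√·) ∘ hA.1.eigenvalues) *
  (star hA.1.eigenvectorUnitary : Matrix n n 𝕜)

end

/-- Frobenius norm of a 3×3 real matrix. -/
def frobNorm (F : M3) : ℝ := Real.sqrt (∑ i, ∑ j, (F i j) ^ 2)

/-- The special orthogonal group SO(3) as a set of matrices. -/
def SO3 : Set M3 := {R | Rᵀ * R = 1 ∧ R.det = 1}

/-- Frobenius distance of a matrix to SO(3). -/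
def distSO3 (F : M3) : ℝ := ⨅ R : SO3, frobNorm (F - (R : M3))

/-!
Write `S = √(FᵀF)`. For orthogonal `R`, expanding the squares gives
`|S - 1|² = tr (FᵀF) - 2 tr S + 3` and `|F - R|² = tr (FᵀF) - 2 tr (RᵀF) + 3`, so it suffices that
`tr G ≤ tr S` for `G = RᵀF`, which satisfies `GᵀG = S²`. In an orthonormal eigenbasis `(bᵢ)` of `S`,
`⟪bᵢ, G bᵢ⟫ ≤ ‖G bᵢ‖ = ‖S bᵢ‖ = ⟪bᵢ, S bᵢ⟫`, and summing over `i` gives the trace inequality.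
-/

open Matrix
open scoped ComplexOrder InnerProductSpace

variable {n : Type*} [Fintype n]

theorem Matrix.trace_transpose_mul_self_sub (X Y : Matrix n n ℝ) :
    ((X - Y)ᵀ * (X - Y)).trace = (Xᵀ * X).trace - 2 * (Yᵀ * X).trace + (Yᵀ * Y).trace := by
  have hXY : (Xᵀ * Y).trace = (Yᵀ * X).trace := by
    rw [← trace_transpose, transpose_mul, transpose_transpose]
  simp only [transpose_sub, sub_mul, mul_sub, trace_sub, hXY]
  ring

variable [DecidableEq n]

theorem Matrix.PosSemidef.posSemidef_sqrt {𝕜 : Type*} [RCLike 𝕜] {A : Matrix n n 𝕜}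
    (hA : A.PosSemidef) : hA.sqrt.PosSemidef :=
  (posSemidef_diagonal_iff.mpr fun _ => RCLike.ofReal_nonneg.mpr (Real.sqrt_nonneg _))
    |>.mul_mul_conjTranspose_same _

theorem Matrix.PosSemidef.sqrt_mul_self {𝕜 : Type*} [RCLike 𝕜] {A : Matrix n n 𝕜}
    (hA : A.PosSemidef) : hA.sqrt * hA.sqrt = A := by
  set U : Matrix n n 𝕜 := (hA.1.eigenvectorUnitary : Matrix n n 𝕜)
  set D : Matrix n n 𝕜 := diagonal ((↑) ∘ (√·) ∘ hA.1.eigenvalues)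
  have hDD : D * D = diagonal ((↑) ∘ hA.1.eigenvalues) := by
    rw [diagonal_mul_diagonal]
    congr 1 with i
    simp only [Function.comp, ← RCLike.ofReal_mul, Real.mul_self_sqrt (hA.eigenvalues_nonneg i)]
  have hUU : star U * U = 1 := Unitary.coe_star_mul_self _
  calc hA.sqrt * hA.sqrt = U * (D * D) * star U := by
        change U * D * star U * (U * D * star U) = _
        simp only [mul_assoc]
        rw [← mul_assoc (star U), hUU, one_mul]
    _ = A := by
        have hspec := hA.1.spectral_theorem
        rw [Unitary.conjStarAlgAut_apply] at hspec
        rw [hDD, ← hspec]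

theorem Matrix.inner_toEuclideanLin_self (A : Matrix n n ℝ) (v : EuclideanSpace ℝ n) :
    ⟪toEuclideanLin A v, toEuclideanLin A v⟫_ℝ = ⟪v, toEuclideanLin (Aᵀ * A) v⟫_ℝ := by
  simp only [EuclideanSpace.inner_eq_star_dotProduct, star_trivial, toLpLin_apply, ← mulVec_mulVec]
  rw [dotProduct_comm (Aᵀ *ᵥ _), dotProduct_transpose_mulVec]

theorem Matrix.norm_toEuclideanLin_eq_of_transpose_mul_self_eq {G H : Matrix n n ℝ}
    (h : Gᵀ * G = Hᵀ * H) (v : EuclideanSpace ℝ n) :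
    ‖toEuclideanLin G v‖ = ‖toEuclideanLin H v‖ := by
  rw [← sq_eq_sq₀ (norm_nonneg _) (norm_nonneg _), ← real_inner_self_eq_norm_sq,
    ← real_inner_self_eq_norm_sq, inner_toEuclideanLin_self, inner_toEuclideanLin_self, h]

theorem Matrix.trace_eq_sum_inner_toEuclideanLin (A : Matrix n n ℝ)
    (b : OrthonormalBasis n ℝ (EuclideanSpace ℝ n)) :
    A.trace = ∑ i, ⟪b i, toEuclideanLin A (b i)⟫_ℝ := by
  rw [← LinearMap.trace_eq_sum_inner]
  exact (trace_toLin_eq A (PiLp.basisFun 2 ℝ n)).symm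

theorem Matrix.trace_le_trace_of_transpose_mul_self_eq {G S : Matrix n n ℝ} (hS : S.PosSemidef)
    (h : Gᵀ * G = S * S) : G.trace ≤ S.trace := by
  set b := hS.1.eigenvectorBasis
  have hSb (i : n) : toEuclideanLin S (b i) = hS.1.eigenvalues i • b i := by
    rw [toLpLin_apply, hS.1.mulVec_eigenvectorBasis]
    rfl
  have hGS : Gᵀ * G = Sᵀ * S := by
    rw [h, ← conjTranspose_eq_transpose_of_trivial, hS.1.eq]
  calc G.trace = ∑ i, ⟪b i, toEuclideanLin G (b i)⟫_ℝ := trace_eq_sum_inner_toEuclideanLin G b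
    _ ≤ ∑ i, ‖toEuclideanLin G (b i)‖ := Finset.sum_le_sum fun i _ =>
        (real_inner_le_norm _ _).trans_eq (by rw [b.orthonormal.1 i, one_mul])
    _ = ∑ i, ‖toEuclideanLin S (b i)‖ := by
        simp_rw [norm_toEuclideanLin_eq_of_transpose_mul_self_eq hGS]
    _ = ∑ i, ⟪b i, toEuclideanLin S (b i)⟫_ℝ := by
        refine Finset.sum_congr rfl fun i _ => ?_
        rw [hSb, norm_smul, inner_smul_right, real_inner_self_eq_norm_sq, b.orthonormal.1 i,
          Real.norm_of_nonneg (hS.eigenvalues_nonneg i)]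
        ring
    _ = S.trace := (trace_eq_sum_inner_toEuclideanLin S b).symm

theorem frobNorm_eq_sqrt_trace (X : M3) : frobNorm X = √(Xᵀ * X).trace := by
  simp only [frobNorm, trace, diag, mul_apply, transpose_apply, sq]
  rw [Finset.sum_comm]

theorem frobNorm_sqrt_sub_one_le_frobNorm_sub (F R : M3) (hR : Rᵀ * R = 1) :
    frobNorm ((posSemidef_conjTranspose_mul_self F).sqrt - 1) ≤ frobNorm (F - R) := by
  set hF := posSemidef_conjTranspose_mul_self F
  have hS : hF.sqrt.PosSemidef := hF.posSemidef_sqrt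
  have hS_symm : hF.sqrtᵀ = hF.sqrt := by
    rw [← conjTranspose_eq_transpose_of_trivial, hS.1.eq]
  have hSS : hF.sqrt * hF.sqrt = Fᵀ * F := by
    rw [hF.sqrt_mul_self, conjTranspose_eq_transpose_of_trivial]
  have htrace : (Rᵀ * F).trace ≤ hF.sqrt.trace := by
    refine trace_le_trace_of_transpose_mul_self_eq hS ?_
    rw [transpose_mul, transpose_transpose, mul_assoc, ← mul_assoc R, mul_eq_one_comm.mp hR,
      one_mul, hSS]
  rw [frobNorm_eq_sqrt_trace, frobNorm_eq_sqrt_trace, trace_transpose_mul_self_sub,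
    trace_transpose_mul_self_sub, hS_symm, hSS, hR, transpose_one, one_mul, one_mul]
  gcongr

/-- For every `F ∈ ℝ^{3×3}`, `|√(FᵀF) − Id| ≤ dist(F, SO(3))`, where `√(FᵀF)` is the
positive semidefinite square root of `FᵀF` (note `Fᴴ = Fᵀ` over `ℝ`). -/
theorem norm_sqrt_sub_id_le_dist_SO3 (F : M3) :
    frobNorm ((Matrix.posSemidef_conjTranspose_mul_self F).sqrt - 1) ≤ distSO3 F := by
  have : Nonempty SO3 := ⟨⟨1, by simp [SO3]⟩⟩
  exact le_ciInf fun R => frobNorm_sqrt_sub_one_le_frobNorm_sub F R R.2.1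
end
end

section
/- Suppose W : ℝ^{3×3} → [0,∞] is continuous, satisfies W(Id + G) = Q(G) + o(|G|²) as G → 0 for some quadratic form Q on ℝ^{3×3}, satisfies W(F) ≥ c₁ dist²(F, SO(3)) for all F, and W(F) ≤ c₂ dist²(F, SO(3)) whenever dist²(F, SO(3)) ≤ ρ, with c₁, c₂, ρ > 0. Then Q satisfies c₁ |sym G|² ≤ Q(G) = Q(sym G) ≤ c₂ |sym G|² for all G ∈ ℝ^{3×3}. -/
open scoped BigOperators Matrix
open Filter Topology

noncomputable section

/-- Symmetric part `sym G = (G + Gᵀ)/2`. -/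
def symPart (G : M3) : M3 := (2⁻¹ : ℝ) • (G + Gᵀ)

/-!
Along a ray, `dist(1 + tG, SO(3)) = t |sym G| + O(t²)`. From below, because every rotation `R`
satisfies `sym(R - 1) = -½ (R - 1)ᵀ(R - 1)`, which is quadratically small; from above, because the
Cayley transform of `½ t skw G` is a rotation within `O(t²)` of `1 + t skw G`. Dividing the bounds
on `W(1 + tG)` by `t²` and letting `t → 0⁺` gives `c₁ |sym G|² ≤ Q G ≤ c₂ |sym G|²`. So `Q` vanishes
on skew matrices and is bounded below on every line `sym G + ℝ skw G`; being affine along such a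
line, it is constant there, whence `Q G = Q (sym G)`.
-/

theorem QuadraticMap.map_add_eq_of_bddBelow {𝕜 E : Type*} [Field 𝕜] [LinearOrder 𝕜]
    [IsStrictOrderedRing 𝕜] [AddCommGroup E] [Module 𝕜 E] {Q : QuadraticForm 𝕜 E} {u v : E}
    (hv : Q v = 0) (hbdd : BddBelow (Set.range fun t : 𝕜 => Q (u + t • v))) :
    Q (u + v) = Q u := by
  have hline : ∀ t : 𝕜, Q (u + t • v) = Q u + t * polar Q u v := by
    intro t
    have : Q (u + t • v) = Q u + Q (t • v) + polar Q u (t • v) := by rw [polar]; ring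
    rw [this, QuadraticMap.map_smul, hv, polar_smul_right, smul_eq_mul, smul_eq_mul]
    ring
  have hpolar : polar Q u v = 0 := by
    obtain ⟨b, hb⟩ := hbdd
    by_contra hp
    have : b ≤ Q (u + ((b - Q u - 1) / polar Q u v) • v) := hb ⟨_, rfl⟩
    rw [hline, div_mul_cancel₀ _ hp] at this
    linarith
  simpa [hpolar] using hline 1

theorem tendsto_div_sq_smul_of_tendsto_abs_sub_div_norm_sq {E : Type*} [NormedAddCommGroup E]
    [NormedSpace ℝ E] {f : E → ℝ} {Q : QuadraticForm ℝ E} (hf0 : f 0 = 0)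
    (hf : Tendsto (fun v => |f v - Q v| / ‖v‖ ^ 2) (𝓝[≠] 0) (𝓝 0)) (v : E) :
    Tendsto (fun t : ℝ => f (t • v) / t ^ 2) (𝓝[>] 0) (𝓝 (Q v)) := by
  rcases eq_or_ne v 0 with rfl | hv
  · simp [hf0]
  have hray : Tendsto (fun t : ℝ => t • v) (𝓝[>] 0) (𝓝[≠] 0) := by
    refine tendsto_nhdsWithin_iff.2 ⟨tendsto_nhdsWithin_of_tendsto_nhds
      ((continuous_id.smul continuous_const).tendsto' 0 0 (zero_smul ℝ v)), ?_⟩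
    exact eventually_nhdsWithin_of_forall fun t ht => smul_ne_zero (ne_of_gt ht) hv
  have key := (hf.comp hray).mul_const (‖v‖ ^ 2)
  rw [zero_mul] at key
  rw [tendsto_iff_norm_sub_tendsto_zero]
  refine key.congr' (eventually_nhdsWithin_of_forall fun t (ht : 0 < t) => ?_)
  simp only [Function.comp_apply, norm_smul, QuadraticMap.map_smul, Real.norm_eq_abs,
    abs_of_pos ht, smul_eq_mul]
  rw [div_sub' (pow_ne_zero 2 ht.ne'), abs_div, abs_of_pos (pow_pos ht 2)]
  field_simp

section Cayley

open Matrix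

variable {n α : Type*} [Fintype n] [DecidableEq n] [CommRing α]

theorem add_transpose_sub_one_of_transpose_mul_self {R : Matrix n n α} (hR : Rᵀ * R = 1) :
    (R - 1) + (R - 1)ᵀ = -((R - 1)ᵀ * (R - 1)) := by
  have h : (R - 1)ᵀ * (R - 1) = Rᵀ * R - Rᵀ - R + 1 := by
    rw [transpose_sub, transpose_one]; noncomm_ring
  rw [h, hR, transpose_sub, transpose_one]
  abel

def cayleyTransform (x : Matrix n n α) : Matrix n n α := (1 + x) * (1 - x)⁻¹

variable {x : Matrix n n α}

theorem transpose_cayleyTransform_mul_self (hx : xᵀ = -x) (h : IsUnit (1 - x).det) :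
    (cayleyTransform x)ᵀ * cayleyTransform x = 1 := by
  have ha : (1 + x)ᵀ = 1 - x := by rw [transpose_add, transpose_one, hx, sub_eq_add_neg]
  have hb : (1 - x)ᵀ = 1 + x := by rw [transpose_sub, transpose_one, hx, sub_neg_eq_add]
  have ha' : IsUnit (1 + x).det := by rwa [← hb, det_transpose]
  have hcomm : (1 - x) * (1 + x) = (1 + x) * (1 - x) := by noncomm_ring
  rw [cayleyTransform, transpose_mul, transpose_nonsing_inv, hb, ha]
  calc (1 + x)⁻¹ * (1 - x) * ((1 + x) * (1 - x)⁻¹)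
      = (1 + x)⁻¹ * ((1 - x) * (1 + x)) * (1 - x)⁻¹ := by simp only [mul_assoc]
    _ = 1 := by rw [hcomm, ← mul_assoc, nonsing_inv_mul _ ha', one_mul, mul_nonsing_inv _ h]

theorem det_cayleyTransform (hx : xᵀ = -x) (h : IsUnit (1 - x).det) :
    (cayleyTransform x).det = 1 := by
  have hdet : (1 + x).det = (1 - x).det := by
    rw [← det_transpose, transpose_add, transpose_one, hx, ← sub_eq_add_neg]
  rw [cayleyTransform, det_mul, det_nonsing_inv, hdet, Ring.mul_inverse_cancel _ h]

theorem one_add_two_nsmul_sub_cayleyTransform (h : IsUnit (1 - x).det) :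
    1 + 2 • x - cayleyTransform x = -(2 • (x * x * (1 - x)⁻¹)) := by
  have h1 : (1 : Matrix n n α) + 2 • x = (1 + 2 • x) * (1 - x) * (1 - x)⁻¹ := by
    rw [mul_assoc, mul_nonsing_inv _ h, mul_one]
  rw [cayleyTransform, h1, ← sub_mul, ← smul_mul_assoc, ← neg_mul]
  congr 1
  noncomm_ring

end Cayley

def skewPart (G : M3) : M3 := (2⁻¹ : ℝ) • (G - Gᵀ)

section SymSkew

open Matrix

variable (A B : M3)

theorem symPart_add : symPart (A + B) = symPart A + symPart B := by
  simp only [symPart, transpose_add]; module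

theorem symPart_smul (c : ℝ) : symPart (c • A) = c • symPart A := by
  simp only [symPart, transpose_smul]; module

theorem symPart_symPart : symPart (symPart A) = symPart A := by
  simp only [symPart, transpose_add, transpose_smul, transpose_transpose]; module

theorem symPart_skewPart : symPart (skewPart A) = 0 := by
  simp only [symPart, skewPart, transpose_sub, transpose_smul, transpose_transpose]; module

theorem symPart_add_skewPart : symPart A + skewPart A = A := by
  simp only [symPart, skewPart]; module

theorem transpose_skewPart : (skewPart A)ᵀ = -skewPart A := by
  simp only [skewPart, transpose_sub, transpose_smul, transpose_transpose]; module

end SymSkew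

theorem one_mem_SO3 : (1 : M3) ∈ SO3 := ⟨by simp, Matrix.det_one⟩

instance : Nonempty SO3 := ⟨⟨1, one_mem_SO3⟩⟩

section FrobeniusNorm

attribute [local instance] Matrix.frobeniusNormedAddCommGroup Matrix.frobeniusNormedRing
  Matrix.frobeniusNormedSpace

theorem frobNorm_eq_norm (A : M3) : frobNorm A = ‖A‖ := by
  simp [frobNorm, Matrix.frobenius_norm_def, Real.sqrt_eq_rpow]

theorem norm_symPart_le (A : M3) : ‖symPart A‖ ≤ ‖A‖ := by
  have := norm_add_le A Aᵀ
  rw [Matrix.frobenius_norm_transpose] at this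
  rw [symPart, norm_smul]
  norm_num
  linarith

theorem norm_skewPart_le (A : M3) : ‖skewPart A‖ ≤ ‖A‖ := by
  have := norm_sub_le A Aᵀ
  rw [Matrix.frobenius_norm_transpose] at this
  rw [skewPart, norm_smul]
  norm_num
  linarith

theorem norm_symPart_sub_one_le {R : M3} (hR : Rᵀ * R = 1) :
    ‖symPart (R - 1)‖ ≤ 2⁻¹ * ‖R - 1‖ ^ 2 := by
  rw [symPart, add_transpose_sub_one_of_transpose_mul_self hR, norm_smul, norm_neg, sq,
    Real.norm_of_nonneg (by norm_num)]
  gcongr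
  exact (Matrix.frobenius_norm_mul _ _).trans_eq (by rw [Matrix.frobenius_norm_transpose])

theorem norm_nonsing_inv_one_sub_le {x : M3} (hx : ‖x‖ ≤ 2⁻¹) : ‖(1 - x)⁻¹‖ ≤ 3 := by
  have hx1 : ‖x‖ < 1 := by linarith
  have hone : ‖(1 : M3)‖ ≤ 2 := by
    rw [← frobNorm_eq_norm, frobNorm, Real.sqrt_le_left zero_le_two]
    norm_num [Matrix.one_apply, Fin.sum_univ_three]
  have hinv : (1 - ‖x‖)⁻¹ ≤ 2 := by
    rw [inv_le_comm₀ (by linarith) two_pos]; linarith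
  rw [Matrix.nonsing_inv_eq_ringInverse, ← geom_series_eq_inverse x hx1]
  linarith [tsum_geometric_le_of_norm_lt_one x hx1]

theorem exists_mem_SO3_norm_one_add_sub_le {S : M3} (hS : Sᵀ = -S) (h : ‖S‖ ≤ 1) :
    ∃ R ∈ SO3, ‖1 + S - R‖ ≤ 2 * ‖S‖ ^ 2 := by
  set x : M3 := (2⁻¹ : ℝ) • S with hxS
  have hx : ‖x‖ = 2⁻¹ * ‖S‖ := by rw [norm_smul]; norm_num
  have hxT : xᵀ = -x := by rw [Matrix.transpose_smul, hS, smul_neg]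
  have hunit : IsUnit (1 - x).det := (Matrix.isUnit_iff_isUnit_det _).1
    (isUnit_one_sub_of_norm_lt_one (by rw [hx]; linarith))
  have hS2 : S = 2 • x := by rw [hxS, two_nsmul, ← add_smul]; norm_num
  refine ⟨cayleyTransform x,
    ⟨transpose_cayleyTransform_mul_self hxT hunit, det_cayleyTransform hxT hunit⟩, ?_⟩
  calc ‖1 + S - cayleyTransform x‖ = ‖2 • (x * x * (1 - x)⁻¹)‖ := by
        rw [hS2, one_add_two_nsmul_sub_cayleyTransform hunit, norm_neg]
    _ ≤ 2 * (‖x‖ * ‖x‖ * ‖(1 - x)⁻¹‖) := by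
        refine norm_nsmul_le.trans ?_
        push_cast
        gcongr
        exact (norm_mul_le _ _).trans (by gcongr; exact norm_mul_le _ _)
    _ ≤ 2 * ‖S‖ ^ 2 := by
        have := norm_nonsing_inv_one_sub_le (x := x) (by rw [hx]; linarith)
        rw [hx]
        nlinarith [norm_nonneg S, norm_nonneg (1 - x)⁻¹]

theorem distSO3_le_norm_sub {F R : M3} (hR : R ∈ SO3) : distSO3 F ≤ ‖F - R‖ := by
  rw [← frobNorm_eq_norm]
  refine ciInf_le ⟨0, ?_⟩ (⟨R, hR⟩ : SO3)
  rintro _ ⟨R', rfl⟩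
  exact Real.sqrt_nonneg _

theorem le_distSO3 {F : M3} {c : ℝ} (h : ∀ R ∈ SO3, c ≤ ‖F - R‖) : c ≤ distSO3 F :=
  le_ciInf fun R => (frobNorm_eq_norm _).symm ▸ h R R.2

theorem distSO3_one : distSO3 1 = 0 :=
  le_antisymm (by simpa using distSO3_le_norm_sub (F := 1) one_mem_SO3)
    (le_distSO3 fun _ _ => norm_nonneg _)

theorem norm_symPart_sub_le_distSO3 (A : M3) : ‖symPart A‖ - 2 * ‖A‖ ^ 2 ≤ distSO3 (1 + A) := by
  refine le_distSO3 fun R hR => ?_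
  rcases le_or_gt ‖1 + A - R‖ ‖A‖ with hnear | hfar
  · have hR1 : ‖R - 1‖ ≤ 2 * ‖A‖ :=
      calc ‖R - 1‖ = ‖A - (1 + A - R)‖ := by congr 1; abel
        _ ≤ ‖A‖ + ‖1 + A - R‖ := norm_sub_le _ _
        _ ≤ 2 * ‖A‖ := by linarith
    have hsym : ‖symPart A‖ ≤ ‖1 + A - R‖ + 2⁻¹ * ‖R - 1‖ ^ 2 :=
      calc ‖symPart A‖ = ‖symPart (1 + A - R) + symPart (R - 1)‖ := by
            rw [← symPart_add]; congr 2; abel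
        _ ≤ ‖1 + A - R‖ + 2⁻¹ * ‖R - 1‖ ^ 2 := (norm_add_le _ _).trans
            (add_le_add (norm_symPart_le _) (norm_symPart_sub_one_le hR.1))
    have hR1sq : ‖R - 1‖ ^ 2 ≤ (2 * ‖A‖) ^ 2 := by gcongr
    linarith
  · nlinarith [norm_symPart_le A]

theorem distSO3_one_add_le {A : M3} (h : ‖skewPart A‖ ≤ 1) :
    distSO3 (1 + A) ≤ ‖symPart A‖ + 2 * ‖skewPart A‖ ^ 2 := by
  obtain ⟨R, hR, hclose⟩ := exists_mem_SO3_norm_one_add_sub_le (transpose_skewPart A) h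
  calc distSO3 (1 + A) ≤ ‖1 + A - R‖ := distSO3_le_norm_sub hR
    _ = ‖symPart A + (1 + skewPart A - R)‖ := by
        conv_lhs => rw [← symPart_add_skewPart A]
        congr 1; abel
    _ ≤ ‖symPart A‖ + 2 * ‖skewPart A‖ ^ 2 := (norm_add_le _ _).trans (by linarith)

theorem abs_distSO3_one_add_sub_le {A : M3} (hA : ‖A‖ ≤ 1) :
    |distSO3 (1 + A) - ‖symPart A‖| ≤ 2 * ‖A‖ ^ 2 := by
  have hskew := norm_skewPart_le A
  have hupper := distSO3_one_add_le (hskew.trans hA)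
  rw [abs_sub_le_iff]
  constructor
  · nlinarith [norm_nonneg (skewPart A)]
  · linarith [norm_symPart_sub_le_distSO3 A]

theorem tendsto_distSO3_one_add_smul_div (G : M3) :
    Tendsto (fun t : ℝ => distSO3 (1 + t • G) / t) (𝓝[>] 0) (𝓝 (frobNorm (symPart G))) := by
  have hsmall : ∀ᶠ t : ℝ in 𝓝[>] 0, ‖t • G‖ ≤ 1 :=
    (tendsto_nhdsWithin_of_tendsto_nhds ((continuous_id.smul continuous_const).norm.tendsto' 0 0
      (by simp))).eventually_le_const zero_lt_one
  have hlin : Tendsto (fun t : ℝ => 2 * ‖G‖ ^ 2 * t) (𝓝[>] 0) (𝓝 0) :=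
    tendsto_nhdsWithin_of_tendsto_nhds ((continuous_const.mul continuous_id).tendsto' 0 0
      (mul_zero _))
  rw [frobNorm_eq_norm, tendsto_iff_norm_sub_tendsto_zero]
  refine squeeze_zero' (Eventually.of_forall fun _ => norm_nonneg _) ?_ hlin
  filter_upwards [hsmall, self_mem_nhdsWithin] with t hsmall (ht : 0 < t)
  have key := abs_distSO3_one_add_sub_le hsmall
  rw [symPart_smul, norm_smul, norm_smul, Real.norm_eq_abs, abs_of_pos ht] at key
  rw [Real.norm_eq_abs, div_sub' ht.ne', abs_div, abs_of_pos ht, div_le_iff₀ ht]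
  nlinarith

theorem tendsto_div_sq_one_add_smul {W : M3 → ℝ} {Q : QuadraticForm ℝ M3} (hW1 : W 1 = 0)
    (hexp : Tendsto (fun G : M3 => |W (1 + G) - Q G| / frobNorm G ^ 2) (𝓝[≠] 0) (𝓝 0))
    (G : M3) : Tendsto (fun t : ℝ => W (1 + t • G) / t ^ 2) (𝓝[>] 0) (𝓝 (Q G)) := by
  simp only [frobNorm_eq_norm] at hexp
  exact tendsto_div_sq_smul_of_tendsto_abs_sub_div_norm_sq (f := fun G => W (1 + G))
    (by simpa using hW1) hexp G

end FrobeniusNorm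

theorem mul_frobNorm_symPart_sq_le {W : M3 → ℝ} {c₁ q : ℝ} {G : M3}
    (hlow : ∀ F, c₁ * distSO3 F ^ 2 ≤ W F)
    (hW : Tendsto (fun t : ℝ => W (1 + t • G) / t ^ 2) (𝓝[>] 0) (𝓝 q)) :
    c₁ * frobNorm (symPart G) ^ 2 ≤ q := by
  refine le_of_tendsto_of_tendsto' (((tendsto_distSO3_one_add_smul_div G).pow 2).const_mul c₁)
    hW fun t => ?_
  rw [div_pow, ← mul_div_assoc]
  exact div_le_div_of_nonneg_right (hlow _) (sq_nonneg t)

theorem le_mul_frobNorm_symPart_sq {W : M3 → ℝ} {c₂ ρ q : ℝ} {G : M3} (hρ : 0 < ρ)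
    (hupp : ∀ F, distSO3 F ^ 2 ≤ ρ → W F ≤ c₂ * distSO3 F ^ 2)
    (hW : Tendsto (fun t : ℝ => W (1 + t • G) / t ^ 2) (𝓝[>] 0) (𝓝 q)) :
    q ≤ c₂ * frobNorm (symPart G) ^ 2 := by
  have hd := tendsto_distSO3_one_add_smul_div G
  have hd0 : Tendsto (fun t : ℝ => distSO3 (1 + t • G)) (𝓝[>] 0) (𝓝 0) := by
    have := hd.mul (tendsto_nhdsWithin_of_tendsto_nhds (tendsto_id (x := 𝓝 (0 : ℝ))))
    rw [mul_zero] at this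
    exact this.congr' (eventually_nhdsWithin_of_forall fun t ht => div_mul_cancel₀ _ (ne_of_gt ht))
  have hnear : ∀ᶠ t : ℝ in 𝓝[>] 0, distSO3 (1 + t • G) ^ 2 ≤ ρ :=
    (hd0.pow 2).eventually_le_const (by simpa using hρ)
  refine le_of_tendsto_of_tendsto hW ((hd.pow 2).const_mul c₂) ?_
  filter_upwards [hnear] with t ht
  rw [div_pow, ← mul_div_assoc]
  exact div_le_div_of_nonneg_right (hupp _ ht) (sq_nonneg t)

theorem quadratic_form_bounds_general (W : M3 → ℝ) (Q : QuadraticForm ℝ M3)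
    (c₁ c₂ ρ : ℝ) (hρ : 0 < ρ)
    (hexp : Tendsto (fun G : M3 => |W (1 + G) - Q G| / (frobNorm G) ^ 2)
      (nhdsWithin 0 {0}ᶜ) (nhds 0))
    (hlow : ∀ F, c₁ * (distSO3 F) ^ 2 ≤ W F)
    (hupp : ∀ F, (distSO3 F) ^ 2 ≤ ρ → W F ≤ c₂ * (distSO3 F) ^ 2) :
    ∀ G : M3, c₁ * (frobNorm (symPart G)) ^ 2 ≤ Q G ∧ Q G = Q (symPart G) ∧
      Q (symPart G) ≤ c₂ * (frobNorm (symPart G)) ^ 2 := by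
  have hW1 : W 1 = 0 := by
    have h₁ := hlow 1
    have h₂ := hupp 1 (by simp [distSO3_one, hρ.le])
    rw [distSO3_one] at h₁ h₂
    linarith
  have hW := tendsto_div_sq_one_add_smul hW1 hexp
  have hbounds (G : M3) :
      c₁ * frobNorm (symPart G) ^ 2 ≤ Q G ∧ Q G ≤ c₂ * frobNorm (symPart G) ^ 2 :=
    ⟨mul_frobNorm_symPart_sq_le hlow (hW G), le_mul_frobNorm_symPart_sq hρ hupp (hW G)⟩
  intro G
  have hskew : Q (skewPart G) = 0 := by
    have := hbounds (skewPart G)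
    simp [symPart_skewPart, frobNorm] at this
    exact le_antisymm this.2 this.1
  have hsym : Q G = Q (symPart G) :=
    calc Q G = Q (symPart G + skewPart G) := by rw [symPart_add_skewPart]
      _ = Q (symPart G) := QuadraticMap.map_add_eq_of_bddBelow hskew
        ⟨c₁ * frobNorm (symPart G) ^ 2, by
          rintro _ ⟨t, rfl⟩
          simpa only [symPart_add, symPart_smul, symPart_symPart, symPart_skewPart, smul_zero,
            add_zero] using (hbounds (symPart G + t • skewPart G)).1⟩
  refine ⟨(hbounds G).1, hsym, ?_⟩
  simpa only [symPart_symPart] using (hbounds (symPart G)).2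

/-- If `W : ℝ^{3×3} → [0,∞]` is continuous, has the quadratic expansion
`W(Id + G) = Q(G) + o(|G|²)` at the identity for a quadratic form `Q`, satisfies
`W(F) ≥ c₁ dist²(F,SO(3))` and `W(F) ≤ c₂ dist²(F,SO(3))` whenever `dist²(F,SO(3)) ≤ ρ`,
then `c₁|sym G|² ≤ Q(G) = Q(sym G) ≤ c₂|sym G|²` for all `G`. -/
theorem quadratic_form_bounds (W : M3 → ℝ) (Q : QuadraticForm ℝ M3)
    (c₁ c₂ ρ : ℝ) (hc₁ : 0 < c₁) (hc₂ : 0 < c₂) (hρ : 0 < ρ)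
    (hW0 : ∀ F, 0 ≤ W F)
    (hWcont : Continuous W)
    (hexp : Tendsto (fun G : M3 => |W (1 + G) - Q G| / (frobNorm G) ^ 2)
      (nhdsWithin 0 {0}ᶜ) (nhds 0))
    (hlow : ∀ F, c₁ * (distSO3 F) ^ 2 ≤ W F)
    (hupp : ∀ F, (distSO3 F) ^ 2 ≤ ρ → W F ≤ c₂ * (distSO3 F) ^ 2) :
    ∀ G : M3, c₁ * (frobNorm (symPart G)) ^ 2 ≤ Q G ∧ Q G = Q (symPart G) ∧
      Q (symPart G) ≤ c₂ * (frobNorm (symPart G)) ^ 2 :=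
  quadratic_form_bounds_general W Q c₁ c₂ ρ hρ hexp hlow hupp
end
end
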